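/- The following series identity holds: √3 = (627/362) · Σ_{k=0}^{∞} ((1/4)_k (3/4)_k / (k! (3/2)_k)) · (131043/4293132484)^k, where the series on the right converges. -/

import Mathlib

/-!
With `b = 1 - 2a`, the odd part of the binomial series of `(1 + z) ^ b` is a hypergeometric
series in `z²`: `choose b (2k+1) = b (a)_k (a+1/2)_k / (k! (3/2)_k)`, so
`₂F₁(a, a + 1/2; 3/2; z²) = ((1 + z) ^ b - (1 - z) ^ b) / (2 b z)`.
For `a = 1/4` and `z = 209 √3 / 65522` (so `z² = 131043 / 4293132484`) both `1 ± z` are perfect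
squares, `((209 √3 ± 1) / 362)²`, and the right-hand side collapses to `362 / (209 √3)`.
-/

/-- The shifted factorial (Pochhammer symbol): `(x)_0 = 1` and
`(x)_n = x * (x+1) * ... * (x+n-1)`. -/
noncomputable def shiftedFactorial (x : ℝ) (n : ℕ) : ℝ :=
  ∏ i ∈ Finset.range n, (x + i)

open Finset Polynomial

lemma shiftedFactorial_succ (x : ℝ) (n : ℕ) :
    shiftedFactorial x (n + 1) = shiftedFactorial x n * (x + n) :=
  prod_range_succ _ _

lemma shiftedFactorial_pos {x : ℝ} (hx : 0 < x) (n : ℕ) : 0 < shiftedFactorial x n :=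
  prod_pos fun _ _ => by positivity

lemma prod_range_two_mul_add_one_sub (b : ℝ) (k : ℕ) :
    ∏ i ∈ range (2 * k + 1), (b - i) =
      b * 4 ^ k * shiftedFactorial ((1 - b) / 2) k * shiftedFactorial (1 - b / 2) k := by
  induction k with
  | zero => simp [shiftedFactorial]
  | succ k ih =>
    rw [show 2 * (k + 1) + 1 = 2 * k + 1 + 1 + 1 by ring, prod_range_succ, prod_range_succ, ih,
      shiftedFactorial_succ, shiftedFactorial_succ]
    push_cast
    ring

lemma factorial_two_mul_add_one_eq (k : ℕ) :
    ((2 * k + 1).factorial : ℝ) = 4 ^ k * k.factorial * shiftedFactorial (3 / 2) k := by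
  induction k with
  | zero => simp [shiftedFactorial]
  | succ k ih =>
    rw [show 2 * (k + 1) + 1 = 2 * k + 1 + 1 + 1 by ring, Nat.factorial_succ (2 * k + 1 + 1),
      Nat.factorial_succ (2 * k + 1), Nat.factorial_succ k, shiftedFactorial_succ]
    push_cast at ih ⊢
    rw [ih]
    ring

lemma Ring.choose_eq_prod_range_sub_div {K : Type*} [Field K] [CharZero K] (a : K) (n : ℕ) :
    Ring.choose a n = (∏ i ∈ range n, (a - i)) / n.factorial := by
  rw [Ring.choose_eq_smul, ← aeval_eq_smeval, aeval_def, eval₂_eq_eval_map, descPochhammer_map,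
    descPochhammer_eval_eq_prod_range, smul_eq_mul, inv_mul_eq_div]

lemma Real.choose_two_mul_add_one (b : ℝ) (k : ℕ) :
    Ring.choose b (2 * k + 1) = b * (shiftedFactorial ((1 - b) / 2) k *
      shiftedFactorial (1 - b / 2) k / (k.factorial * shiftedFactorial (3 / 2) k)) := by
  have := shiftedFactorial_pos (by norm_num : (0 : ℝ) < 3 / 2) k
  rw [Ring.choose_eq_prod_range_sub_div, prod_range_two_mul_add_one_sub,
    factorial_two_mul_add_one_eq]
  field_simp

lemma Real.hasSum_choose_mul_pow {a x : ℝ} (hx : |x| < 1) :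
    HasSum (fun n => Ring.choose a n * x ^ n) ((1 + x) ^ a) := by
  have h := (Real.one_add_rpow_hasFPowerSeriesOnBall_zero (a := a)).hasSum
    (y := x) (by simpa [Metric.mem_eball, edist_dist] using hx)
  simpa [binomialSeries, FormalMultilinearSeries.ofScalars_apply_eq, mul_comm] using h

lemma HasSum.odd_part_of_neg {R : Type*} [CommRing R] [TopologicalSpace R]
    [IsTopologicalAddGroup R] {c : ℕ → R} {x s t : R}
    (hs : HasSum (fun n => c n * x ^ n) s) (ht : HasSum (fun n => c n * (-x) ^ n) t) :
    HasSum (fun k => 2 * (c (2 * k + 1) * x ^ (2 * k + 1))) (s - t) := by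
  have hodd : Function.Injective (fun k : ℕ => 2 * k + 1) := fun a b h => by simp_all
  have heven :
      ∀ n ∉ Set.range (fun k : ℕ => 2 * k + 1), c n * x ^ n - c n * (-x) ^ n = 0 := by
    intro n hn
    rcases Nat.even_or_odd n with hn_even | ⟨m, rfl⟩
    · simp [hn_even.neg_pow]
    · exact absurd ⟨m, rfl⟩ hn
  refine ((hodd.hasSum_iff heven).mpr (hs.sub ht)).congr_fun fun k => ?_
  simp [Odd.neg_pow ⟨k, rfl⟩]
  ring

lemma hasSum_shiftedFactorial_mul_sq_pow {b z : ℝ} (hb : b ≠ 0) (hz₀ : z ≠ 0)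
    (hz : |z| < 1) :
    HasSum (fun k => shiftedFactorial ((1 - b) / 2) k * shiftedFactorial (1 - b / 2) k /
        (k.factorial * shiftedFactorial (3 / 2) k) * (z ^ 2) ^ k)
      (((1 + z) ^ b - (1 - z) ^ b) / (2 * b * z)) := by
  have h := (Real.hasSum_choose_mul_pow hz).odd_part_of_neg
    (Real.hasSum_choose_mul_pow (a := b) (x := -z) (by rwa [abs_neg]))
  rw [← sub_eq_add_neg] at h
  refine (h.div_const (2 * b * z)).congr_fun fun k => ?_
  rw [Real.choose_two_mul_add_one, pow_succ z (2 * k), pow_mul]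
  field_simp

theorem sqrt_three_series_c :
    Summable (fun k : ℕ => shiftedFactorial (1/4) k * shiftedFactorial (3/4) k / ((Nat.factorial k : ℝ) * shiftedFactorial (3/2) k) * (131043 / 4293132484 : ℝ) ^ k) ∧
    Real.sqrt 3 = (627 / 362 : ℝ) *
      ∑' k : ℕ, shiftedFactorial (1/4) k * shiftedFactorial (3/4) k / ((Nat.factorial k : ℝ) * shiftedFactorial (3/2) k) * (131043 / 4293132484 : ℝ) ^ k := by
  have h3 : √3 ^ 2 = 3 := Real.sq_sqrt (by norm_num)
  have h3_gt : 1 < √3 := by rw [Real.lt_sqrt zero_le_one]; norm_num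
  set u : ℝ := 209 * √3 / 65522 with hu
  have hu₀ : u ≠ 0 := by positivity
  have hu₁ : |u| < 1 := by rw [abs_lt]; constructor <;> nlinarith
  have hu_sq : u ^ 2 = 131043 / 4293132484 := by rw [hu, div_pow, mul_pow, h3]; norm_num
  have h_add : 1 + u = ((209 * √3 + 1) / 362) ^ 2 := by
    rw [hu]; linear_combination (-209 ^ 2 / 362 ^ 2 : ℝ) * h3
  have h_sub : 1 - u = ((209 * √3 - 1) / 362) ^ 2 := by
    rw [hu]; linear_combination (-209 ^ 2 / 362 ^ 2 : ℝ) * h3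
  have h := hasSum_shiftedFactorial_mul_sq_pow (b := 1 / 2) (by norm_num) hu₀ hu₁
  rw [show (1 - 1 / 2 : ℝ) / 2 = 1 / 4 by norm_num, show (1 - 1 / 2 / 2 : ℝ) = 3 / 4 by norm_num,
    ← Real.sqrt_eq_rpow, ← Real.sqrt_eq_rpow, h_add, h_sub, Real.sqrt_sq (by positivity),
    Real.sqrt_sq (by linarith), hu_sq] at h
  refine ⟨h.summable, ?_⟩
  rw [h.tsum_eq, hu]
  field_simp
  rw [h3]
  norm_num
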